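/- Let ξ be a real irrational number with 0 < ξ < 1, let μ > μ(ξ), and let (Q_n), (ε_n) be sequences of positive real numbers with Q_n → +∞, ε_n → 0 and ε_n ≥ Q_n^{−1/(μ−1)+o(1)}. Let (η_n) be any sequence of positive reals with η_n → 0 and η_n = ε_n^{o(1)}. Then for all sufficiently large n there exist integers p_n and q_n such that Q_n/√(1+η_n) ≤ q_n ≤ Q_n·√(1+η_n) and ε_n/√(1+2η_n) ≤ q_n ξ − p_n ≤ ε_n·√(1+2η_n). -/

import Mathlib

open Filter Topology

/-!
Choose `ν` with `μ(ξ) < ν < μ`, so that `|q ξ - p| > q ^ (1 - ν)` for all large `q`. Dirichlet's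
theorem at a scale `M` gives `q ≤ M` with `|q ξ - p| ≤ 1 / M`, and the exponent bound then forces
`q > M ^ (1 / (ν - 1))`. Take such approximations `(q_Y, p_Y)` at scale `Q η / 6` and `(q_X, p_X)`
at scale `3 / (ε η)`. A multiple `b q_Y` lands just above `Q` and moves `q ξ - p` by at most `ε`;
a further multiple `a q_X` brings `q ξ - p` into `[ε, ε (1 + η / 3)]`, in steps of size at most
`ε η / 3`, at a cost `|a| q_X ≲ ε q_X ^ ν ≤ Q ^ ((ν - 1) / (μ - 1) + o(1))`, which is `o(Q η)`.
Since `ν < μ`, the hypotheses `ε ≥ Q ^ (-1 / (μ - 1) + o(1))` and `η = Q ^ o(1)` make every size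
comparison hold for large `n`.
-/

/-- The irrationality exponent of a real number, as an extended real:
the infimum of all real `μ` such that `|ξ - p/q| > 1/q^μ` for all integers `p, q`
with `q` sufficiently large (`⊤` if no such real `μ` exists). -/
noncomputable def irrationalityExponent (ξ : ℝ) : EReal :=
  sInf {x : EReal | ∃ μ : ℝ, x = (μ : EReal) ∧
    ∀ᶠ q : ℕ in atTop, ∀ p : ℤ, |ξ - (p : ℝ) / (q : ℝ)| > 1 / (q : ℝ) ^ μ}

lemma exists_lt_eventually_one_lt_rpow_mul_abs {ξ μ : ℝ}
    (hμ : irrationalityExponent ξ < μ) :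
    ∃ ν < μ, ∀ᶠ q : ℕ in atTop, ∀ p : ℤ, 1 < (q : ℝ) ^ (ν - 1) * |q * ξ - p| := by
  obtain ⟨_, ⟨ν, rfl, hν⟩, hνμ⟩ := sInf_lt_iff.1 hμ
  refine ⟨ν, EReal.coe_lt_coe_iff.1 hνμ, ?_⟩
  filter_upwards [hν, eventually_gt_atTop 0] with q hqν hq₀ p
  have hq : (0 : ℝ) < q := Nat.cast_pos.2 hq₀
  have hqν : 1 < (q : ℝ) ^ ν * |ξ - p / q| := by
    rw [← div_lt_iff₀' (Real.rpow_pos_of_pos hq ν)]; exact hqν p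
  have hθ : |q * ξ - p| = q * |ξ - p / q| := by
    rw [← abs_of_pos hq, ← abs_mul, abs_of_pos hq, mul_sub, mul_div_cancel₀ _ hq.ne']
  rwa [hθ, ← mul_assoc, Real.rpow_sub_one hq.ne', div_mul_cancel₀ _ hq.ne']

lemma Irrational.exists_pos_forall_lt_abs_mul_sub {ξ : ℝ} (hξ : Irrational ξ) (N : ℕ) :
    ∃ c > 0, ∀ q < N, 0 < q → ∀ p : ℤ, c < |q * ξ - p| := by
  have h : ∀ᶠ c in 𝓝 (0 : ℝ), ∀ q ∈ Finset.range N, 0 < q → c < |q * ξ - round (q * ξ)| := by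
    refine (eventually_all_finset _).2 fun q _ => ?_
    rcases q.eq_zero_or_pos with rfl | hq
    · exact Eventually.of_forall fun _ h => absurd h (lt_irrefl 0)
    · have hθ := (hξ.natCast_mul hq.ne').ne_int (round (q * ξ))
      exact (eventually_lt_nhds (abs_pos.2 (sub_ne_zero.2 hθ))).mono fun _ hc _ => hc
  obtain ⟨c, hc, hc0⟩ := h.exists_gt
  exact ⟨c, hc, fun q hqN hq p =>
    (hc0 q (Finset.mem_range.2 hqN) hq).trans_le (round_le _ p)⟩

/-- A Dirichlet approximation `q ξ - p` at scale `M` that the exponent `ν` keeps from being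
too good. -/
structure ApproxAtScale (ξ ν M : ℝ) (q : ℕ) (p : ℤ) : Prop where
  pos : 0 < q
  le_scale : (q : ℝ) ≤ M
  abs_le : |q * ξ - p| ≤ 1 / M
  one_lt : 1 < (q : ℝ) ^ (ν - 1) * |q * ξ - p|

lemma Irrational.eventually_exists_approxAtScale {ξ ν : ℝ} (hξ : Irrational ξ)
    (hν : ∀ᶠ q : ℕ in atTop, ∀ p : ℤ, 1 < (q : ℝ) ^ (ν - 1) * |q * ξ - p|) :
    ∀ᶠ M : ℝ in atTop, ∃ q p, ApproxAtScale ξ ν M q p := by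
  obtain ⟨N, hN⟩ := eventually_atTop.1 hν
  obtain ⟨c, hc, hcN⟩ := hξ.exists_pos_forall_lt_abs_mul_sub N
  filter_upwards [eventually_ge_atTop 1, eventually_gt_atTop c⁻¹] with M hM1 hMc
  obtain ⟨q, hq, hqM, hθ⟩ := Real.exists_nat_abs_mul_sub_round_le ξ (Nat.floor_pos.2 hM1)
  have hθM : |q * ξ - round (q * ξ)| ≤ 1 / M :=
    hθ.trans (one_div_le_one_div_of_le (by linarith) (Nat.lt_floor_add_one M).le)
  have hNq : N ≤ q := by
    by_contra! hqN
    have := (hcN q hqN hq _).trans_le hθM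
    rw [one_div, lt_inv_comm₀ hc (by linarith)] at this
    linarith
  exact ⟨q, _, hq, (Nat.cast_le.2 hqM).trans (Nat.floor_le (by linarith)), hθM, hN q hNq _⟩

namespace ApproxAtScale

variable {ξ ν M : ℝ} {q : ℕ} {p : ℤ}

lemma abs_pos (h : ApproxAtScale ξ ν M q p) : 0 < |q * ξ - p| :=
  pos_of_mul_pos_right (zero_lt_one.trans h.one_lt) (Real.rpow_nonneg (Nat.cast_nonneg _) _)

lemma one_le_scale (h : ApproxAtScale ξ ν M q p) : 1 ≤ M :=
  (Nat.one_le_cast.2 h.pos).trans h.le_scale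

lemma scale_lt_rpow (h : ApproxAtScale ξ ν M q p) : M < (q : ℝ) ^ (ν - 1) := by
  have := h.abs_le
  rw [le_div_iff₀ (by linarith [h.one_le_scale]), mul_comm] at this
  exact lt_of_mul_lt_mul_right (this.trans_lt h.one_lt) (abs_nonneg _)

lemma two_lt (h : ApproxAtScale ξ ν M q p) : 2 < ν := by
  by_contra! hν
  have hq : (1 : ℝ) ≤ q := Nat.one_le_cast.2 h.pos
  have hq_lt := h.le_scale.trans_lt h.scale_lt_rpow
  have hrpow_le := Real.rpow_le_rpow_of_exponent_le hq (by linarith : ν - 1 ≤ 1)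
  rw [Real.rpow_one] at hrpow_le
  linarith

lemma div_add_one_mul_le (h : ApproxAtScale ξ ν M q p) {c : ℝ} (hc : 0 ≤ c) (hν : 0 ≤ ν) :
    (c / |q * ξ - p| + 1) * q ≤ c * M ^ ν + M := by
  have hq : (0 : ℝ) < q := Nat.cast_pos.2 h.pos
  have hqM := h.le_scale
  have hinv : 1 / |q * ξ - p| ≤ (q : ℝ) ^ (ν - 1) :=
    ((div_lt_iff₀ h.abs_pos).2 h.one_lt).le
  calc (c / |q * ξ - p| + 1) * q ≤ (c * (q : ℝ) ^ (ν - 1) + 1) * q := by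
        rw [← mul_one_div c]; gcongr
    _ = c * (q : ℝ) ^ ν + q := by
        rw [add_mul, mul_assoc, Real.rpow_sub_one hq.ne', div_mul_cancel₀ _ hq.ne', one_mul]
    _ ≤ c * M ^ ν + M := by gcongr

lemma mul_abs_le (h : ApproxAtScale ξ ν M q p) (hν : 1 < ν) {C : ℝ}
    (hC : C ≤ M ^ (ν / (ν - 1))) : C * |q * ξ - p| ≤ q := by
  have hM : 0 < M := by linarith [h.one_le_scale]
  have hν1 : 0 < ν - 1 := by linarith
  have hMθ : M * |q * ξ - p| ≤ 1 := by
    have := h.abs_le; rwa [le_div_iff₀ hM, mul_comm] at this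
  calc C * |q * ξ - p| ≤ M ^ (ν / (ν - 1)) * |q * ξ - p| := by gcongr
    _ = M ^ (1 / (ν - 1)) * (M * |q * ξ - p|) := by
        rw [← mul_assoc, ← Real.rpow_add_one hM.ne']; congr 2; field_simp; ring
    _ ≤ M ^ (1 / (ν - 1)) := mul_le_of_le_one_right (by positivity) hMθ
    _ ≤ ((q : ℝ) ^ (ν - 1)) ^ (1 / (ν - 1)) := by gcongr; exact h.scale_lt_rpow.le
    _ = q := by rw [← Real.rpow_mul (Nat.cast_nonneg _), mul_one_div_cancel hν1.ne',
        Real.rpow_one]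

end ApproxAtScale

lemma exists_int_mul_mem_Icc (t : ℝ) {θ : ℝ} (hθ : θ ≠ 0) :
    ∃ a : ℤ, t ≤ a * θ ∧ a * θ ≤ t + |θ| ∧ |(a : ℝ)| ≤ |t| / |θ| + 1 := by
  wlog hθ0 : 0 < θ generalizing θ
  · obtain ⟨a, h⟩ := this (neg_ne_zero.2 hθ) (neg_pos.2 ((not_lt.1 hθ0).lt_of_ne hθ))
    refine ⟨-a, ?_⟩
    simpa only [Int.cast_neg, neg_mul, abs_neg, mul_neg] using h
  have hceil := Int.le_ceil (t / θ)
  have hceil' := Int.ceil_lt_add_one (t / θ)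
  refine ⟨⌈t / θ⌉, (div_le_iff₀ hθ0).1 hceil, ?_, ?_⟩
  · rw [abs_of_pos hθ0]
    nlinarith [div_mul_cancel₀ t hθ0.ne']
  · rw [← abs_div, abs_le]
    constructor <;> linarith [neg_abs_le (t / θ), le_abs_self (t / θ)]

lemma exists_mem_Icc_of_approx {ξ Q ε s : ℝ} (hQ : 0 < Q) (hε : 0 < ε) (hs : s ≤ 1)
    {qX qY : ℕ} {pX pY : ℤ} (hqY : 0 < qY) (hθX : qX * ξ - pX ≠ 0)
    (hθXε : |qX * ξ - pX| ≤ ε * s) (hqX : (2 * ε / |qX * ξ - pX| + 1) * qX ≤ Q * s / 4)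
    (hqYQ : (qY : ℝ) ≤ Q * s / 2) (hθY : 2 * Q * |qY * ξ - pY| ≤ ε * qY) :
    ∃ p q : ℤ, Q ≤ q ∧ (q : ℝ) ≤ Q * (1 + s) ∧ ε ≤ q * ξ - p ∧ q * ξ - p ≤ ε * (1 + s) := by
  set θX := (qX : ℝ) * ξ - pX
  set θY := (qY : ℝ) * ξ - pY
  have hqY' : (0 : ℝ) < qY := Nat.cast_pos.2 hqY
  have hs0 : 0 ≤ s := nonneg_of_mul_nonneg_right ((abs_nonneg _).trans hθXε) hε
  -- a multiple `b qY` just above `Q (1 + s / 4)`, with `|b θY| ≤ ε`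
  obtain ⟨b, hb₁, hb₂, hb⟩ := exists_int_mul_mem_Icc (Q + Q * s / 4) hqY'.ne'
  rw [abs_of_pos hqY'] at hb₂ hb
  rw [abs_of_pos (show 0 < Q + Q * s / 4 by positivity)] at hb
  have hbθY : |b * θY| ≤ ε := by
    rw [abs_mul]
    calc |(b : ℝ)| * |θY| ≤ ((Q + Q * s / 4) / qY + 1) * |θY| := by gcongr
      _ ≤ 2 * Q / qY * |θY| := by
          gcongr
          rw [div_add_one hqY'.ne', div_le_div_iff_of_pos_right hqY']
          nlinarith
      _ ≤ ε := by rw [div_mul_eq_mul_div, div_le_iff₀ hqY']; exact hθY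
  -- then `a qX`, with `|a qX| ≤ Q s / 4`, moves `b θY + a θX` into `[ε, ε + |θX|]`
  obtain ⟨a, ha₁, ha₂, ha⟩ := exists_int_mul_mem_Icc (ε - b * θY) hθX
  have haqX : |(a : ℝ) * qX| ≤ Q * s / 4 := by
    rw [abs_mul, Nat.abs_cast]
    have ht : |ε - b * θY| ≤ 2 * ε := by linarith [abs_sub ε (b * θY), abs_of_pos hε]
    calc |(a : ℝ)| * qX ≤ (|ε - b * θY| / |θX| + 1) * qX := by gcongr
      _ ≤ (2 * ε / |θX| + 1) * qX := by gcongr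
      _ ≤ Q * s / 4 := hqX
  refine ⟨b * pY + a * pX, b * qY + a * qX, ?_⟩
  have hθ : ((b * qY + a * qX : ℤ) : ℝ) * ξ - ((b * pY + a * pX : ℤ) : ℝ) = b * θY + a * θX := by
    push_cast; ring
  rw [hθ]
  push_cast
  have := abs_le.1 haqX
  refine ⟨by linarith, by linarith, by linarith, by nlinarith [abs_nonneg θX]⟩

/-- `f n ≤ Q n ^ (a + o(1))`. -/
def ExponentLE (Q f : ℕ → ℝ) (a : ℝ) : Prop :=
  ∀ b, a < b → ∀ᶠ n in atTop, f n ≤ Q n ^ b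

namespace ExponentLE

variable {Q f g : ℕ → ℝ} {a b : ℝ}

lemma of_le_rpow (hQ : Tendsto Q atTop atTop) {δ : ℕ → ℝ} (hδ : Tendsto δ atTop (𝓝 0))
    (h : ∀ᶠ n in atTop, f n ≤ Q n ^ (a + δ n)) : ExponentLE Q f a := fun b hab => by
  filter_upwards [h, hQ.eventually_ge_atTop 1, hδ.eventually (gt_mem_nhds (sub_pos.2 hab))]
    with n hn hQn hδn
  exact hn.trans (Real.rpow_le_rpow_of_exponent_le hQn (by linarith))

lemma inv_of_rpow_le (hQ : Tendsto Q atTop atTop) {δ : ℕ → ℝ} (hδ : Tendsto δ atTop (𝓝 0))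
    (h : ∀ n, Q n ^ (-a + δ n) ≤ f n) : ExponentLE Q (fun n => (f n)⁻¹) a := by
  refine of_le_rpow hQ (δ := fun n => -δ n) (by simpa using hδ.neg) ?_
  filter_upwards [hQ.eventually_gt_atTop 0] with n hQn
  calc (f n)⁻¹ ≤ (Q n ^ (-a + δ n))⁻¹ := inv_anti₀ (Real.rpow_pos_of_pos hQn _) (h n)
    _ = Q n ^ (a + -δ n) := by rw [← Real.rpow_neg hQn.le]; ring_nf

lemma const (hQ : Tendsto Q atTop atTop) (c : ℝ) : ExponentLE Q (fun _ => c) 0 :=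
  fun _ hb => ((tendsto_rpow_atTop hb).comp hQ).eventually_ge_atTop c

lemma mul (hQ : Tendsto Q atTop atTop) (hg0 : ∀ n, 0 ≤ g n) (hf : ExponentLE Q f a)
    (hg : ExponentLE Q g b) : ExponentLE Q (fun n => f n * g n) (a + b) := fun c hc => by
  filter_upwards [hf (a + (c - a - b) / 2) (by linarith), hg (b + (c - a - b) / 2) (by linarith),
    hQ.eventually_gt_atTop 0] with n hfn hgn hQn
  calc f n * g n ≤ Q n ^ (a + (c - a - b) / 2) * Q n ^ (b + (c - a - b) / 2) :=
        mul_le_mul hfn hgn (hg0 n) (Real.rpow_nonneg hQn.le _)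
    _ = Q n ^ c := by rw [← Real.rpow_add hQn]; ring_nf

lemma rpow (hQ : Tendsto Q atTop atTop) (hf0 : ∀ n, 0 ≤ f n) (hf : ExponentLE Q f a) {r : ℝ}
    (hr : 0 < r) : ExponentLE Q (fun n => f n ^ r) (r * a) := fun b hb => by
  filter_upwards [hf (b / r) (by rwa [lt_div_iff₀ hr, mul_comm]), hQ.eventually_gt_atTop 0]
    with n hfn hQn
  calc f n ^ r ≤ (Q n ^ (b / r)) ^ r := Real.rpow_le_rpow (hf0 n) hfn hr.le
    _ = Q n ^ b := by rw [← Real.rpow_mul hQn.le, div_mul_cancel₀ _ hr.ne']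

lemma rpow_of_tendsto_zero (hQ : Tendsto Q atTop atTop) (hf1 : ∀ᶠ n in atTop, 1 ≤ f n)
    (hf : ExponentLE Q f a) {δ : ℕ → ℝ} (hδ : Tendsto δ atTop (𝓝 0)) :
    ExponentLE Q (fun n => f n ^ δ n) 0 := by
  refine of_le_rpow hQ (δ := fun n => (|a| + 1) * |δ n|) (by simpa using hδ.abs.const_mul _) ?_
  filter_upwards [hf1, hf (|a| + 1) (by linarith [le_abs_self a]), hQ.eventually_gt_atTop 0]
    with n hf1n hfn hQn
  calc f n ^ δ n ≤ f n ^ |δ n| := Real.rpow_le_rpow_of_exponent_le hf1n (le_abs_self _)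
    _ ≤ (Q n ^ (|a| + 1)) ^ |δ n| := Real.rpow_le_rpow (by linarith) hfn (abs_nonneg _)
    _ = Q n ^ (0 + (|a| + 1) * |δ n|) := by rw [← Real.rpow_mul hQn.le, zero_add]

end ExponentLE

section Budget

variable {Q ε s : ℕ → ℝ} {β ν : ℝ}

lemma eventually_cost_le (hQ : Tendsto Q atTop atTop) (hε : ∀ n, 0 < ε n) (hs : ∀ n, 0 < s n)
    (hε' : ExponentLE Q (fun n => (ε n)⁻¹) β) (hs' : ExponentLE Q (fun n => (s n)⁻¹) 0)
    (hν : 1 < ν) (hβν : β * (ν - 1) < 1) (hβ : β < 1) :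
    ∀ᶠ n in atTop, 2 * ε n * (ε n * s n)⁻¹ ^ ν + (ε n * s n)⁻¹ ≤ Q n * s n / 4 := by
  have hu (n : ℕ) : 0 ≤ (ε n)⁻¹ := (inv_pos.2 (hε n)).le
  have hv (n : ℕ) : 0 ≤ (s n)⁻¹ := (inv_pos.2 (hs n)).le
  have h₁ : ∀ᶠ n in atTop, 16 * (ε n)⁻¹ ^ (ν - 1) * (s n)⁻¹ ^ (ν + 1) ≤ Q n ^ (1 : ℝ) :=
    ((ExponentLE.const hQ 16).mul hQ (fun n => Real.rpow_nonneg (hu n) _)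
      (hε'.rpow hQ hu (sub_pos.2 hν))).mul hQ (fun n => Real.rpow_nonneg (hv n) _)
      (hs'.rpow hQ hv (by linarith : (0 : ℝ) < ν + 1)) 1 (by linarith)
  have h₂ : ∀ᶠ n in atTop, 8 * (ε n)⁻¹ * (s n)⁻¹ * (s n)⁻¹ ≤ Q n ^ (1 : ℝ) :=
    (((ExponentLE.const hQ 8).mul hQ hu hε').mul hQ hv hs').mul hQ hv hs' 1 (by linarith)
  filter_upwards [h₁, h₂] with n h₁ h₂
  have hεn := hε n
  have hsn := hs n
  rw [Real.rpow_one, Real.rpow_sub_one (inv_pos.2 hεn).ne', Real.rpow_add_one (inv_pos.2 hsn).ne']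
    at h₁
  rw [Real.rpow_one] at h₂
  rw [mul_inv, Real.mul_rpow (hu n) (hv n)]
  have e₁ : 2 * ε n * ((ε n)⁻¹ ^ ν * (s n)⁻¹ ^ ν)
      = 16 * ((ε n)⁻¹ ^ ν / (ε n)⁻¹) * ((s n)⁻¹ ^ ν * (s n)⁻¹) * s n / 8 := by
    field_simp; norm_num
  have e₂ : (ε n)⁻¹ * (s n)⁻¹ = 8 * (ε n)⁻¹ * (s n)⁻¹ * (s n)⁻¹ * s n / 8 := by
    field_simp
  rw [e₁, e₂]
  nlinarith

lemma eventually_le_rpow (hQ : Tendsto Q atTop atTop) (hε : ∀ n, 0 < ε n) (hs : ∀ n, 0 < s n)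
    (hε' : ExponentLE Q (fun n => (ε n)⁻¹) β) (hs' : ExponentLE Q (fun n => (s n)⁻¹) 0)
    (hν : 1 < ν) (hβν : β * (ν - 1) < 1) :
    ∀ᶠ n in atTop, 2 * Q n / ε n ≤ (Q n * s n / 2) ^ (ν / (ν - 1)) := by
  have hβr : β < ν / (ν - 1) - 1 := by
    rw [div_sub_one (by linarith), lt_div_iff₀ (by linarith)]; linarith
  set r := ν / (ν - 1)
  have hr : 0 < r := div_pos (by linarith) (by linarith)
  have hu (n : ℕ) : 0 ≤ (ε n)⁻¹ := (inv_pos.2 (hε n)).le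
  have hv (n : ℕ) : 0 ≤ 2 * (s n)⁻¹ := mul_nonneg zero_le_two (inv_pos.2 (hs n)).le
  have h2v := (ExponentLE.const hQ 2).mul hQ (fun n => (inv_pos.2 (hs n)).le) hs'
  have h : ∀ᶠ n in atTop, 2 * (ε n)⁻¹ * (2 * (s n)⁻¹) ^ r ≤ Q n ^ (r - 1) :=
    ((ExponentLE.const hQ 2).mul hQ hu hε').mul hQ (fun n => Real.rpow_nonneg (hv n) _)
      (h2v.rpow hQ hv hr) (r - 1) (by linarith)
  filter_upwards [h, hQ.eventually_gt_atTop 0] with n h hQn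
  have hsn := hs n
  have hone : (2 * (s n)⁻¹) ^ r * (s n / 2) ^ r = 1 := by
    rw [← Real.mul_rpow (hv n) (by positivity)]
    field_simp
    exact Real.one_rpow r
  calc 2 * Q n / ε n = 2 * (ε n)⁻¹ * (2 * (s n)⁻¹) ^ r * ((s n / 2) ^ r * Q n) := by
        rw [mul_assoc (2 * (ε n)⁻¹), ← mul_assoc ((2 * (s n)⁻¹) ^ r), hone]; ring
    _ ≤ Q n ^ (r - 1) * ((s n / 2) ^ r * Q n) := by gcongr
    _ = (Q n * s n / 2) ^ r := by
        rw [mul_div_assoc, Real.mul_rpow hQn.le (by positivity), Real.rpow_sub_one hQn.ne']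
        field_simp

end Budget

lemma eventually_exists_mem_Icc {ξ ν μ : ℝ} {Q ε s : ℕ → ℝ} (hξ : Irrational ξ)
    (hν : ∀ᶠ q : ℕ in atTop, ∀ p : ℤ, 1 < (q : ℝ) ^ (ν - 1) * |q * ξ - p|) (hνμ : ν < μ)
    (hQ : Tendsto Q atTop atTop) (hε0 : ∀ n, 0 < ε n) (hs0 : ∀ n, 0 < s n)
    (hε : Tendsto ε atTop (𝓝 0)) (hs : Tendsto s atTop (𝓝 0))
    (hε' : ExponentLE Q (fun n => (ε n)⁻¹) (1 / (μ - 1)))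
    (hs' : ExponentLE Q (fun n => (s n)⁻¹) 0) :
    ∀ᶠ n in atTop, ∃ p q : ℤ, Q n ≤ q ∧ (q : ℝ) ≤ Q n * (1 + s n) ∧
      ε n ≤ q * ξ - p ∧ q * ξ - p ≤ ε n * (1 + s n) := by
  have happrox := hξ.eventually_exists_approxAtScale hν
  obtain ⟨_, _, _, happrox₀⟩ := happrox.exists
  have hν2 := happrox₀.two_lt
  have hβν : 1 / (μ - 1) * (ν - 1) < 1 := by
    rw [one_div_mul_eq_div, div_lt_one (by linarith)]; linarith
  have hβ : 1 / (μ - 1) < 1 := by rw [div_lt_one (by linarith)]; linarith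
  have hX : Tendsto (fun n => (ε n * s n)⁻¹) atTop atTop :=
    (tendsto_nhdsWithin_iff.2 ⟨by simpa using hε.mul hs,
      Eventually.of_forall fun n => mul_pos (hε0 n) (hs0 n)⟩).inv_tendsto_nhdsGT_zero
  have hY : Tendsto (fun n => Q n * s n / 2) atTop atTop := by
    refine tendsto_atTop.2 fun C => ?_
    filter_upwards [((ExponentLE.const hQ (2 * C)).mul hQ (fun n => (inv_pos.2 (hs0 n)).le) hs')
      1 (by norm_num)] with n hn
    rw [Real.rpow_one, ← div_eq_mul_inv, div_le_iff₀ (hs0 n)] at hn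
    linarith
  filter_upwards [hX.eventually happrox, hY.eventually happrox,
    eventually_cost_le hQ hε0 hs0 hε' hs' (by linarith) hβν hβ,
    eventually_le_rpow hQ hε0 hs0 hε' hs' (by linarith) hβν,
    hs.eventually (ge_mem_nhds one_pos), hQ.eventually_gt_atTop 0]
    with n ⟨qX, pX, hXn⟩ ⟨qY, pY, hYn⟩ hcost hdisp hs1 hQn
  have hXcost := hXn.div_add_one_mul_le (mul_pos two_pos (hε0 n)).le (by linarith)
  refine exists_mem_Icc_of_approx (pY := pY) hQn (hε0 n) hs1 hYn.pos (abs_pos.1 hXn.abs_pos) ?_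
    (hXcost.trans hcost) hYn.le_scale ?_
  · simpa using hXn.abs_le
  · have := hYn.mul_abs_le (by linarith) hdisp
    rwa [div_mul_eq_mul_div, div_le_iff₀ (hε0 n), mul_comm _ (ε n)] at this

lemma div_sqrt_le_and_le_mul_sqrt {a x t : ℝ} (ha : 0 ≤ a) (ht : 0 ≤ t) (ht3 : t ≤ 3)
    (hax : a ≤ x) (hxa : x ≤ a * (1 + t / 3)) : a / √(1 + t) ≤ x ∧ x ≤ a * √(1 + t) := by
  have h₁ : 1 ≤ √(1 + t) := Real.one_le_sqrt.2 (by linarith)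
  have h₂ : 1 + t / 3 ≤ √(1 + t) := Real.le_sqrt_of_sq_le (by nlinarith)
  exact ⟨(div_le_self ha h₁).trans hax, hxa.trans (mul_le_mul_of_nonneg_left h₂ ha)⟩

theorem eventually_exists_good_approximation_general (ξ : ℝ) (hξ : Irrational ξ)
    (μ : ℝ) (hμ : irrationalityExponent ξ < (μ : EReal))
    (Q ε : ℕ → ℝ) (hQpos : ∀ n, 0 < Q n) (hεpos : ∀ n, 0 < ε n)
    (hQ : Tendsto Q atTop atTop) (hε : Tendsto ε atTop (𝓝 0))
    (hlb : ∃ δ : ℕ → ℝ, Tendsto δ atTop (𝓝 0) ∧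
      ∀ n, ε n ≥ Q n ^ (-(1 / (μ - 1)) + δ n))
    (η : ℕ → ℝ) (hηpos : ∀ n, 0 < η n) (hη : Tendsto η atTop (𝓝 0))
    (hηε : ∃ δ : ℕ → ℝ, Tendsto δ atTop (𝓝 0) ∧ ∀ n, η n = ε n ^ δ n) :
    ∀ᶠ n in atTop, ∃ p q : ℤ,
      Q n / Real.sqrt (1 + η n) ≤ (q : ℝ) ∧ (q : ℝ) ≤ Q n * Real.sqrt (1 + η n) ∧
      ε n / Real.sqrt (1 + 2 * η n) ≤ (q : ℝ) * ξ - (p : ℝ) ∧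
      (q : ℝ) * ξ - (p : ℝ) ≤ ε n * Real.sqrt (1 + 2 * η n) := by
  obtain ⟨ν, hνμ, hν⟩ := exists_lt_eventually_one_lt_rpow_mul_abs hμ
  obtain ⟨δ, hδ, hεδ⟩ := hlb
  obtain ⟨δ', hδ', hηδ'⟩ := hηε
  have hε' := ExponentLE.inv_of_rpow_le hQ hδ hεδ
  have hε1 : ∀ᶠ n in atTop, 1 ≤ (ε n)⁻¹ := (hε.eventually (ge_mem_nhds one_pos)).mono
    fun n hn => (one_le_inv₀ (hεpos n)).2 hn
  have hs' : ExponentLE Q (fun n => (η n / 3)⁻¹) 0 := by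
    have h := (ExponentLE.const hQ 3).mul hQ
      (fun n => Real.rpow_nonneg (inv_nonneg.2 (hεpos n).le) _)
      (hε'.rpow_of_tendsto_zero hQ hε1 hδ')
    have hs_eq : (fun n => (η n / 3)⁻¹) = fun n => 3 * (ε n)⁻¹ ^ δ' n := funext fun n => by
      rw [hηδ', Real.inv_rpow (hεpos n).le, inv_div, div_eq_mul_inv]
    rw [hs_eq]
    exact fun b hb => h b (by linarith)
  filter_upwards [eventually_exists_mem_Icc hξ hν hνμ hQ hεpos
    (fun n => div_pos (hηpos n) three_pos) hε (by simpa using hη.div_const 3) hε' hs',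
    hη.eventually (ge_mem_nhds one_pos)]
    with n ⟨p, q, hq₁, hq₂, hθ₁, hθ₂⟩ hη1
  have hηn := hηpos n
  obtain ⟨hq₃, hq₄⟩ := div_sqrt_le_and_le_mul_sqrt (hQpos n).le hηn.le (by linarith) hq₁ hq₂
  obtain ⟨hθ₃, hθ₄⟩ := div_sqrt_le_and_le_mul_sqrt (t := 2 * η n) (hεpos n).le (by positivity)
    (by linarith) hθ₁ (hθ₂.trans (mul_le_mul_of_nonneg_left (by linarith) (hεpos n).le))
  exact ⟨p, q, hq₃, hq₄, hθ₃, hθ₄⟩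

theorem eventually_exists_good_approximation (ξ : ℝ) (hξ : Irrational ξ)
    (hξ0 : 0 < ξ) (hξ1 : ξ < 1)
    (μ : ℝ) (hμ : irrationalityExponent ξ < (μ : EReal))
    (Q ε : ℕ → ℝ) (hQpos : ∀ n, 0 < Q n) (hεpos : ∀ n, 0 < ε n)
    (hQ : Tendsto Q atTop atTop) (hε : Tendsto ε atTop (𝓝 0))
    (hlb : ∃ δ : ℕ → ℝ, Tendsto δ atTop (𝓝 0) ∧
      ∀ n, ε n ≥ Q n ^ (-(1 / (μ - 1)) + δ n))
    (η : ℕ → ℝ) (hηpos : ∀ n, 0 < η n) (hη : Tendsto η atTop (𝓝 0))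
    (hηε : ∃ δ : ℕ → ℝ, Tendsto δ atTop (𝓝 0) ∧ ∀ n, η n = ε n ^ δ n) :
    ∀ᶠ n in atTop, ∃ p q : ℤ,
      Q n / Real.sqrt (1 + η n) ≤ (q : ℝ) ∧ (q : ℝ) ≤ Q n * Real.sqrt (1 + η n) ∧
      ε n / Real.sqrt (1 + 2 * η n) ≤ (q : ℝ) * ξ - (p : ℝ) ∧
      (q : ℝ) * ξ - (p : ℝ) ≤ ε n * Real.sqrt (1 + 2 * η n) :=
  eventually_exists_good_approximation_general ξ hξ μ hμ Q ε hQpos hεpos hQ hε hlb η hηpos hη hηε
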